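/- Strict per-cluster improvement yields strict global improvement: Under the hypotheses defining CCL, if for some c ∈ 𝒞 there exists a cluster index j with B_j nonempty and err(c_j ∘ p, B_j) < err(c ∘ p, B_j), then CECE(CCL) < CECE(c ∘ p). -/
import Mathlib


open Finset

variable {α : Type*}

/-- Observed positive frequency of labels `y` on bin `B`. -/
noncomputable def obsFreq (y : α → Bool) (B : Finset α) : ℝ :=
  ((B.filter fun x => y x = true).card : ℝ) / (B.card : ℝ)

/-- Mean prediction of predictor `q` on bin `B`. -/
noncomputable def meanPred (q : α → ℝ) (B : Finset α) : ℝ :=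
  (∑ x ∈ B, q x) / (B.card : ℝ)

/-- Per-bin calibration error. -/
noncomputable def calErr (y : α → Bool) (q : α → ℝ) (B : Finset α) : ℝ :=
  |obsFreq y B - meanPred q B|

/-- Clustered expected calibration error for a clustering `CL` into `k` clusters. -/
noncomputable def CECE (y : α → Bool) (S : Finset α) {k : ℕ} (CL : α → Fin k)
    (q : α → ℝ) : ℝ :=
  (1 / (S.card : ℝ)) * ∑ i : Fin k,
    ((S.filter fun x => CL x = i).card : ℝ) * calErr y q (S.filter fun x => CL x = i)

/-- Strict per-cluster improvement yields strict global improvement: if some nonempty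
cluster is strictly better calibrated by its dedicated calibrator than by the unified
calibration `c`, then the clustered calibration strictly improves the clustered
expected calibration error. -/
theorem strict_cluster_improvement_implies_strict_global
    (S : Finset α) (hS : S.Nonempty) (y : α → Bool) (p : α → ℝ)
    (k : ℕ) (CL : α → Fin k) (𝒞 : Set (ℝ → ℝ)) (h𝒞 : 𝒞.Nonempty)
    (ci : Fin k → ℝ → ℝ)
    (hci : ∀ i : Fin k, (S.filter fun x => CL x = i).Nonempty →
      ci i ∈ 𝒞 ∧ ∀ c ∈ 𝒞,
        calErr y (ci i ∘ p) (S.filter fun x => CL x = i) ≤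
          calErr y (c ∘ p) (S.filter fun x => CL x = i)) :
    ∀ c ∈ 𝒞,
      (∃ j : Fin k, (S.filter fun x => CL x = j).Nonempty ∧
        calErr y (ci j ∘ p) (S.filter fun x => CL x = j) <
          calErr y (c ∘ p) (S.filter fun x => CL x = j)) →
      CECE y S CL (fun x => ci (CL x) (p x)) < CECE y S CL (c ∘ p) := by
  intro c hc ⟨j, hj, hjlt⟩
  unfold CECE
  have hSpos : (0:ℝ) < S.card := by exact_mod_cast card_pos.mpr hS
  apply mul_lt_mul_of_pos_left _ (by positivity)
  have key : ∀ i : Fin k,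
      calErr y (fun x => ci (CL x) (p x)) (S.filter fun x => CL x = i)
        = calErr y (ci i ∘ p) (S.filter fun x => CL x = i) := by
    intro i
    unfold calErr meanPred
    congr 2
    refine congrArg (· / _) (Finset.sum_congr rfl ?_)
    intro x hx
    simp only [mem_filter] at hx
    simp [hx.2]
  apply Finset.sum_lt_sum
  · intro i _
    rw [key i]
    rcases (S.filter fun x => CL x = i).eq_empty_or_nonempty with he | hne
    · simp [he]
    · exact mul_le_mul_of_nonneg_left ((hci i hne).2 c hc) (by positivity)
  · refine ⟨j, mem_univ j, ?_⟩
    rw [key j]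
    have hpos : (0:ℝ) < (S.filter fun x => CL x = j).card := by
      exact_mod_cast card_pos.mpr hj
    exact mul_lt_mul_of_pos_left hjlt hpos
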